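/- Let X be a cartesian restriction category (restriction category with restriction products) in which all restriction idempotents split and every object is separable (the diagonal Δ : X → X × X is a restriction monic). Then the category Total(X) of total maps has equalizers, and hence all finite limits. Specifically, for total f, g : X → Y, the equalizer is obtained by splitting the restriction idempotent overline{r ∘ ⟨f,g⟩}, where r : Y × Y → Y is the restriction retraction of Δ. -/

import Mathlib

open CategoryTheory CategoryTheory.Limits

universe v u

/-- A restriction category: a category with an operation assigning to each
morphism `f : A ⟶ B` a morphism `ρ f : A ⟶ A` satisfying axioms R.1–R.4.
(Composition is written diagrammatically: `f ≫ g` is "first `f`, then `g`",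
so the paper's `g ∘ f` is `f ≫ g`.) -/
class RestrictionCategory (C : Type u) [Category.{v} C] where
  ρ : ∀ {A B : C}, (A ⟶ B) → (A ⟶ A)
  R1 : ∀ {A B : C} (f : A ⟶ B), ρ f ≫ f = f
  R2 : ∀ {A B D : C} (f : A ⟶ B) (g : A ⟶ D), ρ f ≫ ρ g = ρ g ≫ ρ f
  R3 : ∀ {A B D : C} (f : A ⟶ B) (g : A ⟶ D), ρ (ρ f ≫ g) = ρ f ≫ ρ g
  R4 : ∀ {A B D : C} (f : A ⟶ B) (g : B ⟶ D), f ≫ ρ g = ρ (f ≫ g) ≫ f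

open RestrictionCategory

/-- Binary restriction products on a restriction category: a restriction
functor `pr` (so `ρ (f × g) = ρ f × ρ g`) together with total natural
diagonals `diag` and total lax natural projections `fst`, `snd`, satisfying
the triangle identities. -/
class RestrictionBinaryProducts (C : Type u) [Category.{v} C]
    [RestrictionCategory C] where
  pr : C → C → C
  pmap : ∀ {A A' B B' : C}, (A ⟶ A') → (B ⟶ B') → (pr A B ⟶ pr A' B')
  pmap_id : ∀ A B : C, pmap (𝟙 A) (𝟙 B) = 𝟙 (pr A B)
  pmap_comp : ∀ {A A' A'' B B' B'' : C} (f : A ⟶ A') (f' : A' ⟶ A'')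
    (g : B ⟶ B') (g' : B' ⟶ B''),
    pmap (f ≫ f') (g ≫ g') = pmap f g ≫ pmap f' g'
  pmap_rho : ∀ {A A' B B' : C} (f : A ⟶ A') (g : B ⟶ B'),
    RestrictionCategory.ρ (pmap f g) =
      pmap (RestrictionCategory.ρ f) (RestrictionCategory.ρ g)
  diag : ∀ A : C, A ⟶ pr A A
  diag_total : ∀ A : C, RestrictionCategory.ρ (diag A) = 𝟙 A
  diag_nat : ∀ {A B : C} (f : A ⟶ B), f ≫ diag B = diag A ≫ pmap f f
  fst : ∀ A B : C, pr A B ⟶ A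
  snd : ∀ A B : C, pr A B ⟶ B
  fst_total : ∀ A B : C, RestrictionCategory.ρ (fst A B) = 𝟙 (pr A B)
  snd_total : ∀ A B : C, RestrictionCategory.ρ (snd A B) = 𝟙 (pr A B)
  fst_lax : ∀ {A A' B B' : C} (f : A ⟶ A') (g : B ⟶ B'),
    pmap f g ≫ fst A' B' =
      pmap (RestrictionCategory.ρ f) (RestrictionCategory.ρ g) ≫ fst A B ≫ f
  snd_lax : ∀ {A A' B B' : C} (f : A ⟶ A') (g : B ⟶ B'),
    pmap f g ≫ snd A' B' =
      pmap (RestrictionCategory.ρ f) (RestrictionCategory.ρ g) ≫ snd A B ≫ g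
  diag_fst : ∀ A : C, diag A ≫ fst A A = 𝟙 A
  diag_snd : ∀ A : C, diag A ≫ snd A A = 𝟙 A
  diag_pmap : ∀ A B : C,
    diag (pr A B) ≫ pmap (fst A B) (snd A B) = 𝟙 (pr A B)

open RestrictionBinaryProducts

/-- Restriction products: binary restriction products together with a
restriction terminal object. -/
class RestrictionProducts (C : Type u) [Category.{v} C]
    [RestrictionCategory C] extends RestrictionBinaryProducts C where
  one : C
  bang : ∀ A : C, A ⟶ one
  bang_total : ∀ A : C, RestrictionCategory.ρ (bang A) = 𝟙 A
  bang_one : bang one = 𝟙 one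
  bang_lax : ∀ {A B : C} (f : A ⟶ B),
    f ≫ bang B = RestrictionCategory.ρ f ≫ bang A

section Total

variable {C : Type u} [Category.{v} C] [RestrictionCategory C]

lemma rho_one (A : C) : ρ (𝟙 A) = 𝟙 A := by
  simpa using R1 (𝟙 A)

lemma rho_comp {A B D : C} (f : A ⟶ B) (g : B ⟶ D) :
    ρ (f ≫ g) = ρ (f ≫ ρ g) := by
  have h1 : ρ (f ≫ ρ g) = ρ (f ≫ g) ≫ ρ f := by rw [R4 f g, R3]
  have h2 : ρ f ≫ ρ (f ≫ g) = ρ (f ≫ g) := by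
    rw [← R3, ← Category.assoc, R1]
  rw [h1, R2, h2]

end Total

/-- The category `Total(X)` of total maps of a restriction category `X`. -/
def TotalCat (C : Type u) [Category.{v} C] [RestrictionCategory C] : Type u := C

instance totalCategory (C : Type u) [Category.{v} C] [RestrictionCategory C] :
    Category.{v} (TotalCat C) where
  Hom A B := {f : (show C from A) ⟶ (show C from B) // ρ f = 𝟙 (show C from A)}
  id A := ⟨𝟙 (show C from A), rho_one _⟩
  comp {A B D} f g :=
    ⟨f.1 ≫ g.1, by rw [rho_comp, g.2, Category.comp_id, f.2]⟩
  id_comp f := Subtype.ext (Category.id_comp f.1)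
  comp_id f := Subtype.ext (Category.comp_id f.1)
  assoc f g h := Subtype.ext (Category.assoc f.1 g.1 h.1)

open RestrictionBinaryProducts

/-!
For total `f g : X ⟶ Y`, the partial map `⟨f, g⟩ ≫ r` is defined exactly where `⟨f, g⟩` lands in
the diagonal, i.e. where `f` and `g` agree, so its restriction idempotent cuts out the equalizer
and splitting it produces the equalizing object: a total map equalizing `f` and `g` is fixed by
the idempotent, hence factors uniquely through the splitting. Restriction products and the
restriction terminal object are genuine products and a terminal object in `Total(X)`, so together
with equalizers this gives all finite limits.
-/

section Restriction

variable {C : Type u} [Category.{v} C] [RestrictionCategory C]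

lemma rho_rho {A B : C} (f : A ⟶ B) : ρ (ρ f) = ρ f := by
  simpa only [Category.comp_id, rho_one] using R3 f (𝟙 A)

lemma rho_comp_of_total {A B D : C} {f : A ⟶ B} {g : B ⟶ D}
    (hf : ρ f = 𝟙 A) (hg : ρ g = 𝟙 B) : ρ (f ≫ g) = 𝟙 A := by
  rw [rho_comp, hg, Category.comp_id, hf]

lemma rho_comp_of_rho_eq_id {A B D : C} (f : A ⟶ B) {g : B ⟶ D} (hg : ρ g = 𝟙 B) :
    ρ (f ≫ g) = ρ f := by
  rw [rho_comp, hg, Category.comp_id]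

lemma comp_rho_of_rho_comp_eq_id {A B D : C} {j : A ⟶ B} {d : B ⟶ D} (h : ρ (j ≫ d) = 𝟙 A) :
    j ≫ ρ d = j := by
  rw [R4, h, Category.id_comp]

lemma rho_eq_id_of_comp_eq_id {A B : C} {i : A ⟶ B} {s : B ⟶ A} (h : i ≫ s = 𝟙 A) :
    ρ i = 𝟙 A := by
  have absorb : ρ i ≫ ρ (i ≫ s) = ρ (i ≫ s) := by rw [← R3, ← Category.assoc, R1]
  rwa [h, rho_one, Category.comp_id] at absorb

lemma existsUnique_total_factor_of_split {A E Q : C} {e : A ⟶ A} (he : ρ e = e)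
    {i : E ⟶ A} {s : A ⟶ E} (his : i ≫ s = 𝟙 E) (hsi : s ≫ i = e)
    {j : Q ⟶ A} (hj : ρ j = 𝟙 Q) (hje : j ≫ e = j) :
    ∃! k : Q ⟶ E, ρ k = 𝟙 Q ∧ k ≫ i = j := by
  have hs : ρ s = e := by
    rw [← he, ← hsi, rho_comp_of_rho_eq_id s (rho_eq_id_of_comp_eq_id his)]
  refine ⟨j ≫ s, ⟨?_, by rw [Category.assoc, hsi, hje]⟩, ?_⟩
  · rw [rho_comp, hs, hje, hj]
  · rintro k ⟨-, rfl⟩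
    rw [Category.assoc, his, Category.comp_id]

end Restriction

namespace RestrictionBinaryProducts

variable {C : Type u} [Category.{v} C] [RestrictionCategory C] [RestrictionBinaryProducts C]

def lift {Q A B : C} (u : Q ⟶ A) (v : Q ⟶ B) : Q ⟶ pr A B := diag Q ≫ pmap u v

lemma rho_lift {Q A B : C} {u : Q ⟶ A} {v : Q ⟶ B} (hu : ρ u = 𝟙 Q) (hv : ρ v = 𝟙 Q) :
    ρ (lift u v) = 𝟙 Q := by
  rw [lift, rho_comp, pmap_rho, hu, hv, pmap_id, Category.comp_id, diag_total]

lemma lift_fst {Q A B : C} {u : Q ⟶ A} {v : Q ⟶ B} (hu : ρ u = 𝟙 Q) (hv : ρ v = 𝟙 Q) :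
    lift u v ≫ fst A B = u := by
  rw [lift, Category.assoc, fst_lax, hu, hv, pmap_id, Category.id_comp,
    ← Category.assoc, diag_fst, Category.id_comp]

lemma lift_snd {Q A B : C} {u : Q ⟶ A} {v : Q ⟶ B} (hu : ρ u = 𝟙 Q) (hv : ρ v = 𝟙 Q) :
    lift u v ≫ snd A B = v := by
  rw [lift, Category.assoc, snd_lax, hu, hv, pmap_id, Category.id_comp,
    ← Category.assoc, diag_snd, Category.id_comp]

lemma lift_comp_fst_comp_snd {Q A B : C} (t : Q ⟶ pr A B) :
    lift (t ≫ fst A B) (t ≫ snd A B) = t := by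
  rw [lift, pmap_comp, ← Category.assoc, ← diag_nat, Category.assoc, diag_pmap,
    Category.comp_id]

lemma comp_lift {P Q A B : C} (j : P ⟶ Q) (u : Q ⟶ A) (v : Q ⟶ B) :
    j ≫ lift u v = lift (j ≫ u) (j ≫ v) := by
  rw [lift, lift, ← Category.assoc, diag_nat, Category.assoc, pmap_comp]

lemma lift_self {Q A : C} (h : Q ⟶ A) : lift h h = h ≫ diag A :=
  (diag_nat h).symm

section Separable

variable {X Y : C} {r : pr Y Y ⟶ Y}

/-- On the domain of `d ≫ r`, the map `d` lands in the diagonal. -/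
lemma rho_comp_retraction_comp {d : X ⟶ pr Y Y} (hr : r ≫ diag Y = ρ r) :
    ρ (d ≫ r) ≫ d = d ≫ r ≫ diag Y := by
  rw [hr, R4]

lemma rho_lift_comp_retraction_comp_eq {f g : X ⟶ Y} (hf : ρ f = 𝟙 X) (hg : ρ g = 𝟙 X)
    (hr : r ≫ diag Y = ρ r) :
    ρ (lift f g ≫ r) ≫ f = ρ (lift f g ≫ r) ≫ g := by
  have h : ρ (lift f g ≫ r) ≫ lift f g ≫ fst Y Y = ρ (lift f g ≫ r) ≫ lift f g ≫ snd Y Y := by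
    simp only [← Category.assoc, rho_comp_retraction_comp hr]
    simp only [Category.assoc, diag_fst, diag_snd]
  rwa [lift_fst hf hg, lift_snd hf hg] at h

lemma comp_lift_comp_retraction {P : C} {f g : X ⟶ Y} {j : P ⟶ X} (hjfg : j ≫ f = j ≫ g)
    (hr : diag Y ≫ r = 𝟙 Y) :
    j ≫ lift f g ≫ r = j ≫ f := by
  rw [← Category.assoc, comp_lift, ← hjfg, lift_self, Category.assoc, hr, Category.comp_id]

lemma isEqualizer_of_split {f g : X ⟶ Y} (hf : ρ f = 𝟙 X) (hg : ρ g = 𝟙 X)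
    (hr₁ : diag Y ≫ r = 𝟙 Y) (hr₂ : r ≫ diag Y = ρ r)
    {E : C} {i : E ⟶ X} {s : X ⟶ E}
    (his : i ≫ s = 𝟙 E) (hsi : s ≫ i = ρ (lift f g ≫ r)) :
    ρ i = 𝟙 E ∧ i ≫ f = i ≫ g ∧
      ∀ (Q : C) (j : Q ⟶ X), ρ j = 𝟙 Q → j ≫ f = j ≫ g →
        ∃! k : Q ⟶ E, ρ k = 𝟙 Q ∧ k ≫ i = j := by
  have hie : i ≫ ρ (lift f g ≫ r) = i := by
    rw [← hsi, ← Category.assoc, his, Category.id_comp]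
  refine ⟨rho_eq_id_of_comp_eq_id his, ?_, fun Q j hj hjfg => ?_⟩
  · rw [← hie, Category.assoc, Category.assoc, rho_lift_comp_retraction_comp_eq hf hg hr₂]
  · have hje : j ≫ ρ (lift f g ≫ r) = j := by
      apply comp_rho_of_rho_comp_eq_id
      rw [comp_lift_comp_retraction hjfg hr₁, rho_comp_of_total hj hf]
    exact existsUnique_total_factor_of_split (rho_rho _) his hsi hj hje

end Separable

end RestrictionBinaryProducts

lemma RestrictionProducts.eq_bang_of_total {C : Type u} [Category.{v} C] [RestrictionCategory C]
    [RestrictionProducts C] {A : C} {t : A ⟶ one} (ht : ρ t = 𝟙 A) : t = bang A := by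
  simpa only [bang_one, Category.comp_id, ht, Category.id_comp] using bang_lax t

namespace TotalCat

variable {C : Type u} [Category.{v} C] [RestrictionCategory C]

def of (A : C) : TotalCat C := A

def homMk {A B : C} (f : A ⟶ B) (hf : ρ f = 𝟙 A) : of A ⟶ of B :=
  ⟨f, hf⟩

lemma hasEqualizers [RestrictionBinaryProducts C]
    (hsplit : ∀ (A : C) (e : A ⟶ A), ρ e = e →
      ∃ (E : C) (i : E ⟶ A) (s : A ⟶ E), i ≫ s = 𝟙 E ∧ s ≫ i = e)
    (hsep : ∀ Y : C, ∃ r : pr Y Y ⟶ Y, diag Y ≫ r = 𝟙 Y ∧ r ≫ diag Y = ρ r) :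
    HasEqualizers (TotalCat C) := by
  refine @hasEqualizers_of_hasLimit_parallelPair _ _ fun {X Y} {f g} => ?_
  obtain ⟨r, hr₁, hr₂⟩ := hsep Y
  obtain ⟨E, i, s, his, hsi⟩ := hsplit _ _ (rho_rho (lift f.1 g.1 ≫ r))
  obtain ⟨hi, hifg, factor⟩ := isEqualizer_of_split f.2 g.2 hr₁ hr₂ his hsi
  refine ⟨⟨Fork.ofι (homMk i hi) (Subtype.ext hifg), Fork.IsLimit.ofExistsUnique fun c => ?_⟩⟩
  obtain ⟨k, ⟨hk, hki⟩, hk_unique⟩ := factor _ c.ι.1 c.ι.2 (congrArg Subtype.val c.condition)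
  exact ⟨homMk (C := C) k hk, Subtype.ext hki,
    fun m hm => Subtype.ext (hk_unique m.1 ⟨m.2, congrArg Subtype.val hm⟩)⟩

variable [RestrictionProducts C]

def isTerminalOne : IsTerminal (of (RestrictionProducts.one (C := C))) :=
  IsTerminal.ofUniqueHom
    (fun (A : C) => homMk (RestrictionProducts.bang A) (RestrictionProducts.bang_total A))
    fun _ m => Subtype.ext (RestrictionProducts.eq_bang_of_total m.2)

def prodFan (A B : C) : BinaryFan (of A) (of B) :=
  BinaryFan.mk (P := of (pr A B)) (homMk (fst A B) (fst_total A B))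
    (homMk (snd A B) (snd_total A B))

def prodFanIsLimit (A B : C) : IsLimit (prodFan A B) :=
  BinaryFan.isLimitMk
    (fun c => homMk (C := C) (lift c.fst.1 c.snd.1) (rho_lift c.fst.2 c.snd.2))
    (fun c => Subtype.ext (lift_fst c.fst.2 c.snd.2))
    (fun c => Subtype.ext (lift_snd c.fst.2 c.snd.2))
    fun c m h₁ h₂ => Subtype.ext <| by
      rw [← lift_comp_fst_comp_snd m.1]
      exact congrArg₂ lift (congrArg Subtype.val h₁) (congrArg Subtype.val h₂)

lemma hasFiniteProducts : HasFiniteProducts (TotalCat C) :=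
  have : HasTerminal (TotalCat C) := isTerminalOne.hasTerminal
  have : HasBinaryProducts (TotalCat C) :=
    @hasBinaryProducts_of_hasLimit_pair _ _ fun {A B} => ⟨⟨_, prodFanIsLimit (C := C) A B⟩⟩
  hasFiniteProducts_of_has_binary_and_terminal

end TotalCat

/-- Let `X` be a cartesian restriction category (restriction products) in
which all restriction idempotents split and every object is separable (each
diagonal is a restriction monic).  Then `Total(X)` has equalizers, and hence
all finite limits; specifically, for total `f g : X ⟶ Y` the equalizer is
obtained by splitting the restriction idempotent `overline{r ∘ ⟨f,g⟩}`,
where `r` is the restriction retraction of the diagonal of `Y`. -/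
theorem stmt_18 {C : Type u} [Category.{v} C] [RestrictionCategory C]
    [RestrictionProducts C]
    (hsplit : ∀ (A : C) (e : A ⟶ A), ρ e = e →
      ∃ (E : C) (i : E ⟶ A) (s : A ⟶ E), i ≫ s = 𝟙 E ∧ s ≫ i = e)
    (hsep : ∀ Y : C, ∃ r : pr Y Y ⟶ Y, diag Y ≫ r = 𝟙 Y ∧ r ≫ diag Y = ρ r) :
    HasEqualizers (TotalCat C) ∧ HasFiniteLimits (TotalCat C) ∧
    (∀ (X Y : C) (f g : X ⟶ Y), ρ f = 𝟙 X → ρ g = 𝟙 X →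
      ∀ r : pr Y Y ⟶ Y, diag Y ≫ r = 𝟙 Y → r ≫ diag Y = ρ r →
      ∀ (E : C) (i : E ⟶ X) (s : X ⟶ E),
        i ≫ s = 𝟙 E → s ≫ i = ρ ((diag X ≫ pmap f g) ≫ r) →
        (ρ i = 𝟙 E ∧ i ≫ f = i ≫ g ∧
         ∀ (Q : C) (j : Q ⟶ X), ρ j = 𝟙 Q → j ≫ f = j ≫ g →
           ∃! k : Q ⟶ E, ρ k = 𝟙 Q ∧ k ≫ i = j)) := by
  have := TotalCat.hasEqualizers hsplit hsep
  have := TotalCat.hasFiniteProducts (C := C)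
  exact ⟨inferInstance, hasFiniteLimits_of_hasEqualizers_and_finite_products,
    fun X Y f g hf hg r hr₁ hr₂ E i s his hsi => isEqualizer_of_split hf hg hr₁ hr₂ his hsi⟩
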